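/- arXiv:2205.02261 — 3 statements merged into one kernel-verified Lean document; each statement's English description precedes it below -/
import Mathlib

section
/- Let d be a positive integer, k ≥ 1, G a set of d×d unitary matrices, and S an ℝ-linear subspace of the Hermitian d×d matrices that is closed under conjugation by G (i.e., VσV† ∈ S for all V ∈ G, σ ∈ S). Let ρ ∈ S, and let A be a Hermitian d×d matrix that is Hilbert–Schmidt orthogonal to S, i.e., Tr[σA] = 0 for every σ ∈ S. Then for every d^{k-1}×d^{k-1} complex matrix B and every V ∈ G, Tr[(VρV†)^{⊗k} (A ⊗ B)] = 0. Consequently, for any finite family (A_m, B_m) with each A_m Hermitian and orthogonal to S, the model h(ρ) = Tr[ρ^{⊗k} Σ_m c_m (A_m ⊗ B_m)] (c_m ∈ ℝ) is G-invariant and identically zero on S. (Proposition 2, with the Lie-algebraic hypotheses 'ρ ∈ i𝔤 and A ∈ i𝔤^⊥ for the Lie algebra 𝔤 of the Lie group G' encoded by the conjugation-invariant subspace S = i𝔤 and the orthogonality condition.) -/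
/-! The trace factorizes over Kronecker products, `Tr[(X ⊗ Y)(A ⊗ B)] = Tr[XA] · Tr[YB]`,
so the first factor vanishes as soon as `X ∈ S` and `A ⊥ S`. Since conjugation by `G`
preserves `S`, the model vanishes at both `σ` and `VσV†`, and its `G`-invariance is `0 = 0`. -/

open Matrix Kronecker

/-- The `k`-fold Kronecker (tensor) power of a `d × d` matrix, as a matrix indexed by
`Fin k → Fin d` (i.e. a `d^k × d^k` matrix). -/
noncomputable def tensorPow {d : ℕ} (k : ℕ) (M : Matrix (Fin d) (Fin d) ℂ) :
    Matrix (Fin k → Fin d) (Fin k → Fin d) ℂ :=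
  fun i j => ∏ t : Fin k, M (i t) (j t)

section KroneckerTrace

variable {R m n : Type*} [CommSemiring R] [Fintype m] [Fintype n]

theorem Matrix.trace_kronecker_mul_kronecker (X A : Matrix m m R) (Y B : Matrix n n R) :
    ((X ⊗ₖ Y) * (A ⊗ₖ B)).trace = (X * A).trace * (Y * B).trace := by
  rw [← mul_kronecker_mul, trace_kronecker]

theorem Matrix.trace_kronecker_mul_sum_smul_kronecker_eq_zero {ι : Type*} (s : Finset ι)
    (X : Matrix m m R) (Y : Matrix n n R) (c : ι → R) (As : ι → Matrix m m R)
    (Bs : ι → Matrix n n R) (hX : ∀ i ∈ s, (X * As i).trace = 0) :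
    ((X ⊗ₖ Y) * ∑ i ∈ s, c i • (As i ⊗ₖ Bs i)).trace = 0 := by
  rw [Finset.mul_sum, trace_sum]
  refine Finset.sum_eq_zero fun i hi => ?_
  rw [Matrix.mul_smul, trace_smul, trace_kronecker_mul_kronecker, hX i hi, zero_mul, smul_zero]

end KroneckerTrace

theorem stmt_1_general {d k : ℕ}
    (G : Set (Matrix (Fin d) (Fin d) ℂ))
    (S : Submodule ℝ (Matrix (Fin d) (Fin d) ℂ))
    (hSclosed : ∀ V ∈ G, ∀ σ ∈ S, V * σ * Vᴴ ∈ S)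
    (ρ : Matrix (Fin d) (Fin d) ℂ) (hρ : ρ ∈ S)
    (A : Matrix (Fin d) (Fin d) ℂ)
    (hAorth : ∀ σ ∈ S, (σ * A).trace = 0) :
    (∀ (B : Matrix (Fin k → Fin d) (Fin k → Fin d) ℂ), ∀ V ∈ G,
        (((V * ρ * Vᴴ) ⊗ₖ tensorPow k (V * ρ * Vᴴ)) * (A ⊗ₖ B)).trace = 0) ∧
    (∀ (N : ℕ) (c : Fin N → ℝ)
        (As : Fin N → Matrix (Fin d) (Fin d) ℂ)
        (Bs : Fin N → Matrix (Fin k → Fin d) (Fin k → Fin d) ℂ),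
        (∀ m, (As m)ᴴ = As m) →
        (∀ m, ∀ σ ∈ S, (σ * As m).trace = 0) →
        ∀ σ ∈ S, ∀ V ∈ G,
          (((V * σ * Vᴴ) ⊗ₖ tensorPow k (V * σ * Vᴴ)) *
              (∑ m, (c m : ℂ) • (As m ⊗ₖ Bs m))).trace
            = ((σ ⊗ₖ tensorPow k σ) * (∑ m, (c m : ℂ) • (As m ⊗ₖ Bs m))).trace ∧
          ((σ ⊗ₖ tensorPow k σ) * (∑ m, (c m : ℂ) • (As m ⊗ₖ Bs m))).trace = 0) := by
  constructor
  · intro B V hV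
    rw [trace_kronecker_mul_kronecker, hAorth _ (hSclosed V hV ρ hρ), zero_mul]
  · intro N c As Bs _ hAsorth σ hσ V hV
    have model_vanishes : ∀ X ∈ S,
        ((X ⊗ₖ tensorPow k X) * ∑ m, (c m : ℂ) • (As m ⊗ₖ Bs m)).trace = 0 :=
      fun X hX => trace_kronecker_mul_sum_smul_kronecker_eq_zero _ _ _ _ _ _
        fun m _ => hAsorth m X hX
    rw [model_vanishes _ (hSclosed V hV σ hσ), model_vanishes σ hσ]
    exact ⟨rfl, rfl⟩

/-- **Proposition 2.** Let `G` be a set of `d × d` unitary matrices and `S` an ℝ-linear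
subspace of the Hermitian matrices that is closed under conjugation by `G`.  Let `ρ ∈ S`
and let `A` be Hermitian and Hilbert–Schmidt orthogonal to `S`.  Then for every matrix `B`
on the remaining `k` tensor factors (the model acts on `k + 1 ≥ 1` copies) and every
`V ∈ G`, `Tr[(VρV†)^{⊗(k+1)} (A ⊗ B)] = 0`; and for any finite family `(Aₘ, Bₘ)` with
each `Aₘ` Hermitian and orthogonal to `S`, the model
`h(σ) = Tr[σ^{⊗(k+1)} Σₘ cₘ (Aₘ ⊗ Bₘ)]` is `G`-invariant and identically zero on `S`.
Here `σ^{⊗(k+1)}` is realized as `σ ⊗ σ^{⊗k}` with the first factor split off. -/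
theorem stmt_1 {d k : ℕ} (hd : 0 < d)
    (G : Set (Matrix (Fin d) (Fin d) ℂ))
    (hG : ∀ V ∈ G, Vᴴ * V = 1 ∧ V * Vᴴ = 1)
    (S : Submodule ℝ (Matrix (Fin d) (Fin d) ℂ))
    (hSherm : ∀ σ ∈ S, σᴴ = σ)
    (hSclosed : ∀ V ∈ G, ∀ σ ∈ S, V * σ * Vᴴ ∈ S)
    (ρ : Matrix (Fin d) (Fin d) ℂ) (hρ : ρ ∈ S)
    (A : Matrix (Fin d) (Fin d) ℂ) (hA : Aᴴ = A)
    (hAorth : ∀ σ ∈ S, (σ * A).trace = 0) :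
    (∀ (B : Matrix (Fin k → Fin d) (Fin k → Fin d) ℂ), ∀ V ∈ G,
        (((V * ρ * Vᴴ) ⊗ₖ tensorPow k (V * ρ * Vᴴ)) * (A ⊗ₖ B)).trace = 0) ∧
    (∀ (N : ℕ) (c : Fin N → ℝ)
        (As : Fin N → Matrix (Fin d) (Fin d) ℂ)
        (Bs : Fin N → Matrix (Fin k → Fin d) (Fin k → Fin d) ℂ),
        (∀ m, (As m)ᴴ = As m) →
        (∀ m, ∀ σ ∈ S, (σ * As m).trace = 0) →
        ∀ σ ∈ S, ∀ V ∈ G,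
          (((V * σ * Vᴴ) ⊗ₖ tensorPow k (V * σ * Vᴴ)) *
              (∑ m, (c m : ℂ) • (As m ⊗ₖ Bs m))).trace
            = ((σ ⊗ₖ tensorPow k σ) * (∑ m, (c m : ℂ) • (As m ⊗ₖ Bs m))).trace ∧
          ((σ ⊗ₖ tensorPow k σ) * (∑ m, (c m : ℂ) • (As m ⊗ₖ Bs m))).trace = 0) :=
  stmt_1_general G S hSclosed ρ hρ A hAorth
end

section
/- Let n ≥ 1, d = 2ⁿ, and identify (ℂ²)^{⊗n} with ℂ^d. Let O be a d×d complex matrix such that Tr[(V₁⊗⋯⊗Vₙ) ρ (V₁⊗⋯⊗Vₙ)† O] = Tr[ρO] for every density matrix ρ and every n-tuple (V₁,…,Vₙ) of 2×2 unitary matrices. Then O = (Tr[O]/d)·𝟙, and the resulting model is the constant function ρ ↦ Tr[O]/d on density matrices; in particular no such model can provide any information distinguishing entangled from separable pure states. (Theorem 6: no local-unitary-invariant conventional-experiment model can classify the multipartite entanglement dataset.) -/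
/-!
Moving the conjugation onto `O` by cyclicity of the trace, invariance on pure states says that
`v† (U† O U) v = v† O v` for every vector `v`, hence `U† O U = O` for every local unitary `U` by
polarization. Conjugating by a tensor product of swaps carries the basis vector `eᵢ` to `eⱼ`, so
the diagonal of `O` is constant; conjugating by a Pauli `Z` on a site where `i` and `j` differ
flips the sign of `O i j`, so `O` is diagonal. Thus `O` is a scalar, determined by its trace.
-/

open Matrix ComplexOrder

/-- The Kronecker product `V₁ ⊗ ⋯ ⊗ Vₙ` of an `n`-tuple of `2 × 2` matrices, as a
`2ⁿ × 2ⁿ` matrix on `(ℂ²)^{⊗n}` (indexed by `Fin n → Fin 2`). -/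
noncomputable def localTensor {n : ℕ} (Vs : Fin n → Matrix (Fin 2) (Fin 2) ℂ) :
    Matrix (Fin n → Fin 2) (Fin n → Fin 2) ℂ :=
  fun i j => ∏ t : Fin n, Vs t (i t) (j t)

namespace Matrix

section Density

variable {ι : Type*} [Fintype ι]

theorem ext_of_star_dotProduct_mulVec {A B : Matrix ι ι ℂ}
    (h : ∀ v, star v ⬝ᵥ (A *ᵥ v) = star v ⬝ᵥ (B *ᵥ v)) : A = B := by
  classical
  apply (toLpLin 2 2).injective
  rw [← ext_inner_map]
  intro x
  simp only [EuclideanSpace.inner_eq_star_dotProduct, ofLp_toLpLin, toLin'_apply]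
  rw [dotProduct_comm, star_dotProduct, h, ← star_dotProduct, dotProduct_comm]

theorem trace_vecMulVec_mul (v w : ι → ℂ) (B : Matrix ι ι ℂ) :
    (vecMulVec v w * B).trace = w ⬝ᵥ (B *ᵥ v) := by
  rw [vecMulVec_mul, trace_vecMulVec, dotProduct_comm, dotProduct_mulVec]

theorem eq_of_forall_density_trace_mul_eq {A B : Matrix ι ι ℂ}
    (h : ∀ ρ : Matrix ι ι ℂ, ρ.PosSemidef ∧ ρ.trace = 1 → (ρ * A).trace = (ρ * B).trace) :
    A = B := by
  classical
  refine ext_of_star_dotProduct_mulVec fun v => ?_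
  rcases eq_or_ne v 0 with rfl | hv
  · simp
  have hnorm : v ⬝ᵥ star v ≠ 0 := dotProduct_self_star_eq_zero.not.mpr hv
  have hρ := h ((v ⬝ᵥ star v)⁻¹ • vecMulVec v (star v)) ⟨?_, ?_⟩
  · simpa [smul_mul_assoc, trace_vecMulVec_mul, hnorm] using hρ
  · exact (posSemidef_vecMulVec_self_star v).smul (inv_nonneg.mpr (dotProduct_self_star_nonneg v))
  · rw [trace_smul, trace_vecMulVec, smul_eq_mul, inv_mul_cancel₀ hnorm]

theorem conjTranspose_mul_mul_eq_of_forall_density {U O : Matrix ι ι ℂ}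
    (h : ∀ ρ : Matrix ι ι ℂ, ρ.PosSemidef ∧ ρ.trace = 1 →
      (U * ρ * Uᴴ * O).trace = (ρ * O).trace) :
    Uᴴ * O * U = O :=
  eq_of_forall_density_trace_mul_eq fun ρ hρ => by
    rw [← h ρ hρ, ← Matrix.mul_assoc, ← Matrix.mul_assoc, trace_mul_comm, ← Matrix.mul_assoc,
      ← Matrix.mul_assoc]

theorem eq_trace_div_card_smul_one [DecidableEq ι] {M : Matrix ι ι ℂ}
    (hdiag : ∀ i j, M i i = M j j) (hoff : ∀ i j, i ≠ j → M i j = 0) :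
    M = (M.trace / Fintype.card ι) • 1 := by
  rcases isEmpty_or_nonempty ι with hι | hι
  · exact Subsingleton.elim _ _
  obtain ⟨i₀⟩ := id hι
  have hM : M = M i₀ i₀ • 1 := by
    ext i j
    rcases eq_or_ne i j with rfl | hij
    · simp [hdiag i i₀]
    · simp [hoff i j hij, hij]
  have htr : M.trace / Fintype.card ι = M i₀ i₀ := by
    simp [Matrix.trace, hdiag _ i₀]
  rwa [htr]

end Density

section Conjugation

variable {m R : Type*} [Fintype m] [DecidableEq m] [CommRing R] [StarRing R]

theorem permMatrix_mem_unitaryGroup (σ : Equiv.Perm m) :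
    σ.permMatrix R ∈ unitaryGroup m R := by
  rw [mem_unitaryGroup_iff', star_eq_conjTranspose, conjTranspose_permMatrix, ← permMatrix_mul,
    mul_inv_cancel, permMatrix_one]

theorem diagonal_mem_unitaryGroup {d : m → R} (hd : ∀ a, star (d a) * d a = 1) :
    diagonal d ∈ unitaryGroup m R := by
  rw [mem_unitaryGroup_iff', star_eq_conjTranspose, diagonal_conjTranspose, diagonal_mul_diagonal,
    ← diagonal_one]
  exact congrArg diagonal (funext hd)

theorem conjTranspose_permMatrix_mul_mul_permMatrix (σ : Equiv.Perm m) (O : Matrix m m R) :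
    (σ.permMatrix R)ᴴ * O * σ.permMatrix R = O.submatrix σ.symm σ.symm := by
  rw [conjTranspose_permMatrix, Equiv.Perm.permMatrix, PEquiv.toMatrix_toPEquiv_mul,
    PEquiv.mul_toMatrix_toPEquiv, submatrix_submatrix]
  rfl

theorem conjTranspose_diagonal_mul_mul_diagonal_apply (d : m → R) (O : Matrix m m R) (a b : m) :
    ((diagonal d)ᴴ * O * diagonal d) a b = star (d a) * O a b * d b := by
  simp [diagonal_conjTranspose]

end Conjugation

end Matrix

section LocalTensor

variable {n : ℕ}

theorem localTensor_permMatrix (σ : Fin n → Equiv.Perm (Fin 2)) :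
    localTensor (fun t => (σ t).permMatrix ℂ) =
      Equiv.Perm.permMatrix ℂ (Equiv.piCongrRight σ) := by
  ext a b
  simp [localTensor, Finset.prod_boole, funext_iff]

theorem localTensor_diagonal (d : Fin n → Fin 2 → ℂ) :
    localTensor (fun t => diagonal (d t)) = diagonal fun a => ∏ t, d t (a t) := by
  ext a b
  rcases eq_or_ne a b with rfl | hab
  · simp [localTensor]
  · obtain ⟨t, ht⟩ := Function.ne_iff.1 hab
    simp only [localTensor, diagonal_apply_ne _ hab]
    exact Finset.prod_eq_zero (Finset.mem_univ t) (diagonal_apply_ne _ ht)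

def IsLocalUnitaryInvariant (O : Matrix (Fin n → Fin 2) (Fin n → Fin 2) ℂ) : Prop :=
  ∀ Vs : Fin n → Matrix (Fin 2) (Fin 2) ℂ, (∀ t, Vs t ∈ unitaryGroup (Fin 2) ℂ) →
    (localTensor Vs)ᴴ * O * localTensor Vs = O

namespace IsLocalUnitaryInvariant

variable {O : Matrix (Fin n → Fin 2) (Fin n → Fin 2) ℂ}

theorem apply_self_eq (hO : IsLocalUnitaryInvariant O) (i j : Fin n → Fin 2) : O i i = O j j := by
  have h := hO (fun t => (Equiv.swap (i t) (j t)).permMatrix ℂ)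
    fun t => permMatrix_mem_unitaryGroup _
  rw [localTensor_permMatrix, conjTranspose_permMatrix_mul_mul_permMatrix] at h
  have hij : (Equiv.piCongrRight fun t => Equiv.swap (i t) (j t)).symm i = j := by
    ext t
    simp
  simpa [hij] using (congrFun₂ h i i).symm

theorem apply_eq_zero (hO : IsLocalUnitaryInvariant O) {i j : Fin n → Fin 2} (hij : i ≠ j) :
    O i j = 0 := by
  obtain ⟨t₀, ht₀⟩ := Function.ne_iff.1 hij
  set d : Fin n → Fin 2 → ℂ := fun t b => if t = t₀ ∧ b ≠ i t₀ then -1 else 1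
  have h := hO (fun t => diagonal (d t))
    fun t => diagonal_mem_unitaryGroup fun b => by simp only [d]; split_ifs <;> simp
  rw [localTensor_diagonal] at h
  have hi : ∏ t, d t (i t) = 1 :=
    Finset.prod_eq_one fun t _ => if_neg (by rintro ⟨rfl, hne⟩; exact hne rfl)
  have hj : ∏ t, d t (j t) = -1 := by
    rw [Finset.prod_eq_single t₀ (fun t _ ht => if_neg (by tauto)) (by simp)]
    exact if_pos ⟨rfl, Ne.symm ht₀⟩
  have hsign := congrFun₂ h i j
  rw [conjTranspose_diagonal_mul_mul_diagonal_apply, hi, hj, star_one] at hsign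
  linear_combination -hsign / 2

end IsLocalUnitaryInvariant

end LocalTensor

theorem stmt_12_general {n : ℕ}
    (O : Matrix (Fin n → Fin 2) (Fin n → Fin 2) ℂ)
    (hO : ∀ (ρ : Matrix (Fin n → Fin 2) (Fin n → Fin 2) ℂ)
        (Vs : Fin n → Matrix (Fin 2) (Fin 2) ℂ),
      (ρ.PosSemidef ∧ ρ.trace = 1) →
      (∀ t, (Vs t)ᴴ * Vs t = 1 ∧ Vs t * (Vs t)ᴴ = 1) →
      (localTensor Vs * ρ * (localTensor Vs)ᴴ * O).trace = (ρ * O).trace) :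
    O = (O.trace / (2 ^ n : ℂ)) • (1 : Matrix (Fin n → Fin 2) (Fin n → Fin 2) ℂ) ∧
    ∀ ρ : Matrix (Fin n → Fin 2) (Fin n → Fin 2) ℂ,
      (ρ.PosSemidef ∧ ρ.trace = 1) → (ρ * O).trace = O.trace / (2 ^ n : ℂ) := by
  have hinv : IsLocalUnitaryInvariant O := fun Vs hVs =>
    conjTranspose_mul_mul_eq_of_forall_density fun ρ hρ => hO ρ Vs hρ hVs
  have hscalar : O = (O.trace / (2 ^ n : ℂ)) • 1 := by
    simpa using eq_trace_div_card_smul_one hinv.apply_self_eq fun _ _ => hinv.apply_eq_zero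
  refine ⟨hscalar, fun ρ hρ => ?_⟩
  conv_lhs => rw [hscalar]
  rw [mul_smul_comm, mul_one, trace_smul, hρ.2, smul_eq_mul, mul_one]

/-- **Theorem 6.** Let `n ≥ 1`, `d = 2ⁿ`.  If `O` satisfies
`Tr[(V₁⊗⋯⊗Vₙ) ρ (V₁⊗⋯⊗Vₙ)† O] = Tr[ρ O]` for every density matrix `ρ` and every tuple
of `2 × 2` unitaries, then `O = (Tr[O]/d)·𝟙`, and the model is the constant
`ρ ↦ Tr[O]/d` on density matrices: no local-unitary-invariant conventional-experiment
model can classify the multipartite entanglement dataset. -/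
theorem stmt_12 {n : ℕ} (hn : 1 ≤ n)
    (O : Matrix (Fin n → Fin 2) (Fin n → Fin 2) ℂ)
    (hO : ∀ (ρ : Matrix (Fin n → Fin 2) (Fin n → Fin 2) ℂ)
        (Vs : Fin n → Matrix (Fin 2) (Fin 2) ℂ),
      (ρ.PosSemidef ∧ ρ.trace = 1) →
      (∀ t, (Vs t)ᴴ * Vs t = 1 ∧ Vs t * (Vs t)ᴴ = 1) →
      (localTensor Vs * ρ * (localTensor Vs)ᴴ * O).trace = (ρ * O).trace) :
    O = (O.trace / (2 ^ n : ℂ)) • (1 : Matrix (Fin n → Fin 2) (Fin n → Fin 2) ℂ) ∧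
    ∀ ρ : Matrix (Fin n → Fin 2) (Fin n → Fin 2) ℂ,
      (ρ.PosSemidef ∧ ρ.trace = 1) → (ρ * O).trace = O.trace / (2 ^ n : ℂ) :=
  stmt_12_general O hO
end

section
/- Let n ≥ 1, d = 2ⁿ, and let ρ be an n-qubit density matrix on (ℂ²)^{⊗n}. For a subset α ⊆ {1,…,n}, let ρ_α denote the reduced density matrix of ρ on the qubits in α (with the convention Tr[ρ_∅²] = 1), and for j ∈ {1,…,n} let SWAP^{(j)} denote the operator on ((ℂ²)^{⊗n})^{⊗2} that swaps the j-th qubit of the first copy with the j-th qubit of the second copy. Then for every subset Q ⊆ {1,…,n}: Tr[(ρ ⊗ ρ)(𝟙 − 2^{−|Q|} ⊗_{j∈Q}(𝟙₄^{(j)} + SWAP^{(j)}))] = 1 − 2^{−|Q|} Σ_{α⊆Q} Tr[ρ_α²], using Tr[(ρ⊗ρ)·⊗_{j∈α}SWAP^{(j)}] = Tr[ρ_α²] and the expansion ⊗_{j∈Q}(𝟙₄^{(j)} + SWAP^{(j)}) = Σ_{α⊆Q} ⊗_{j∈α}SWAP^{(j)}. (Theorem 7, Concentratable Entanglement case: the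 local-unitary-invariant model recovering the Concentratable Entanglement family of multipartite entanglement measures.) -/
/-! Split each basis label of `(ℂ²)^{⊗n}` into its restriction `u` to `α` and `v` to the
complement. `⊗_{j∈α} SWAP^{(j)}` exchanges the `u`-parts of the two copies, so
`Tr[(ρ ⊗ σ) SWAP_α] = ∑ ρ(uv, u'v) σ(u'w, uw)`, which is `Tr[ρ_α σ_α]` once the sums over the
traced-out parts `v`, `w` are taken inside. The second identity is then linearity of the trace
together with `Tr[ρ ⊗ ρ] = (Tr ρ)² = 1`. -/

open Matrix Kronecker ComplexOrder

/-- The reduced density matrix of an `n`-qubit state `ρ` on the qubits in `α`,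
obtained by tracing out all qubits not in `α`. -/
noncomputable def reducedState {n : ℕ} (ρ : Matrix (Fin n → Fin 2) (Fin n → Fin 2) ℂ)
    (α : Finset (Fin n)) :
    Matrix ({j : Fin n // j ∈ α} → Fin 2) ({j : Fin n // j ∈ α} → Fin 2) ℂ :=
  fun u u' => ∑ v : {j : Fin n // j ∉ α} → Fin 2,
    ρ (fun j => if h : j ∈ α then u ⟨j, h⟩ else v ⟨j, h⟩)
      (fun j => if h : j ∈ α then u' ⟨j, h⟩ else v ⟨j, h⟩)

/-- The operator `⊗_{j∈α} SWAP^{(j)}` on two copies of `(ℂ²)^{⊗n}`: it exchanges the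
`j`-th qubit of the first copy with the `j`-th qubit of the second copy for each
`j ∈ α`, acting as the identity elsewhere. -/
def swapQubits {n : ℕ} (α : Finset (Fin n)) :
    Matrix ((Fin n → Fin 2) × (Fin n → Fin 2)) ((Fin n → Fin 2) × (Fin n → Fin 2)) ℂ :=
  fun p q =>
    if (∀ j, p.1 j = if j ∈ α then q.2 j else q.1 j) ∧
       (∀ j, p.2 j = if j ∈ α then q.1 j else q.2 j) then 1 else 0

namespace swapQubits

variable {n : ℕ}

abbrev splitAt (α : Finset (Fin n)) :
    (Fin n → Fin 2) ≃ ({j // j ∈ α} → Fin 2) × ({j // j ∉ α} → Fin 2) :=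
  Equiv.piEquivPiSubtypeProd (· ∈ α) fun _ => Fin 2

lemma reducedState_apply (ρ : Matrix (Fin n → Fin 2) (Fin n → Fin 2) ℂ) (α : Finset (Fin n))
    (u u' : {j // j ∈ α} → Fin 2) :
    reducedState ρ α u u' = ∑ v, ρ ((splitAt α).symm (u, v)) ((splitAt α).symm (u', v)) :=
  rfl

lemma piecewise_splitAt_symm (α : Finset (Fin n)) (u u' : {j // j ∈ α} → Fin 2)
    (v w : {j // j ∉ α} → Fin 2) :
    α.piecewise ((splitAt α).symm (u', w)) ((splitAt α).symm (u, v))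
      = (splitAt α).symm (u', v) := by
  funext j
  by_cases h : j ∈ α <;> simp [Equiv.piEquivPiSubtypeProd, h]

lemma apply_eq_ite (α : Finset (Fin n)) (p q : (Fin n → Fin 2) × (Fin n → Fin 2)) :
    swapQubits α p q = if p = (α.piecewise q.2 q.1, α.piecewise q.1 q.2) then 1 else 0 := by
  simp only [swapQubits, Prod.ext_iff, funext_iff, Finset.piecewise]

lemma trace_kronecker_mul (ρ σ : Matrix (Fin n → Fin 2) (Fin n → Fin 2) ℂ)
    (α : Finset (Fin n)) :
    ((ρ ⊗ₖ σ) * swapQubits α).trace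
      = ∑ x, ∑ y, ρ x (α.piecewise y x) * σ y (α.piecewise x y) := by
  simp only [Matrix.trace, Matrix.diag, Matrix.mul_apply, apply_eq_ite, mul_ite, mul_one,
    mul_zero, Finset.sum_ite_eq', Finset.mem_univ, if_true, Fintype.sum_prod_type,
    Matrix.kroneckerMap_apply]

theorem trace_kronecker_mul_eq_trace_reducedState_mul
    (ρ σ : Matrix (Fin n → Fin 2) (Fin n → Fin 2) ℂ) (α : Finset (Fin n)) :
    ((ρ ⊗ₖ σ) * swapQubits α).trace = (reducedState ρ α * reducedState σ α).trace := by
  rw [trace_kronecker_mul]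
  simp only [Matrix.trace, Matrix.diag, Matrix.mul_apply, reducedState_apply, Finset.sum_mul_sum]
  rw [← (splitAt α).symm.sum_comp, Fintype.sum_prod_type]
  refine Finset.sum_congr rfl fun u _ => ?_
  rw [Finset.sum_comm]
  simp only [← (splitAt α).symm.sum_comp (fun y => ∑ _v, _), Fintype.sum_prod_type,
    piecewise_splitAt_symm]
  exact Finset.sum_congr rfl fun u' _ => Finset.sum_comm

end swapQubits

theorem stmt_15_general {n : ℕ}
    (ρ : Matrix (Fin n → Fin 2) (Fin n → Fin 2) ℂ)
    (hρ : ρ.PosSemidef ∧ ρ.trace = 1) (Q : Finset (Fin n)) :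
    (∀ α : Finset (Fin n),
      ((ρ ⊗ₖ ρ) * swapQubits α).trace
        = (reducedState ρ α * reducedState ρ α).trace) ∧
    ((ρ ⊗ₖ ρ) *
        ((1 : Matrix ((Fin n → Fin 2) × (Fin n → Fin 2))
            ((Fin n → Fin 2) × (Fin n → Fin 2)) ℂ)
          - ((2 : ℂ) ^ Q.card)⁻¹ • ∑ α ∈ Q.powerset, swapQubits α)).trace
      = 1 - ((2 : ℂ) ^ Q.card)⁻¹ *
          ∑ α ∈ Q.powerset, (reducedState ρ α * reducedState ρ α).trace := by
  have swap_trick := swapQubits.trace_kronecker_mul_eq_trace_reducedState_mul ρ ρ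
  refine ⟨swap_trick, ?_⟩
  simp only [Matrix.mul_sub, Matrix.mul_one, Matrix.mul_smul, Matrix.mul_sum, Matrix.trace_sub,
    Matrix.trace_smul, Matrix.trace_sum, swap_trick, Matrix.trace_kronecker, hρ.2, one_mul,
    smul_eq_mul]

/-- **Theorem 7 (Concentratable Entanglement case).** For an `n`-qubit density matrix
`ρ` and any `Q ⊆ {1,…,n}`:
`Tr[(ρ⊗ρ)·⊗_{j∈α}SWAP^{(j)}] = Tr[ρ_α²]` for every `α`, and
`Tr[(ρ ⊗ ρ)(𝟙 − 2^{−|Q|} ⊗_{j∈Q}(𝟙₄^{(j)} + SWAP^{(j)}))]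
  = 1 − 2^{−|Q|} Σ_{α⊆Q} Tr[ρ_α²]`,
using the expansion `⊗_{j∈Q}(𝟙₄^{(j)} + SWAP^{(j)}) = Σ_{α⊆Q} ⊗_{j∈α}SWAP^{(j)}`. -/
theorem stmt_15 {n : ℕ} (hn : 1 ≤ n)
    (ρ : Matrix (Fin n → Fin 2) (Fin n → Fin 2) ℂ)
    (hρ : ρ.PosSemidef ∧ ρ.trace = 1) (Q : Finset (Fin n)) :
    (∀ α : Finset (Fin n),
      ((ρ ⊗ₖ ρ) * swapQubits α).trace
        = (reducedState ρ α * reducedState ρ α).trace) ∧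
    ((ρ ⊗ₖ ρ) *
        ((1 : Matrix ((Fin n → Fin 2) × (Fin n → Fin 2))
            ((Fin n → Fin 2) × (Fin n → Fin 2)) ℂ)
          - ((2 : ℂ) ^ Q.card)⁻¹ • ∑ α ∈ Q.powerset, swapQubits α)).trace
      = 1 - ((2 : ℂ) ^ Q.card)⁻¹ *
          ∑ α ∈ Q.powerset, (reducedState ρ α * reducedState ρ α).trace :=
  stmt_15_general ρ hρ Q
end
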